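/- The map Γ₀ : PJ₃ × H → H defined by Γ₀(g, h) = g·h if g·h ∈ H and Γ₀(g, h) = g·h·s₁₃ otherwise, is well defined (its values always lie in H) and defines a group action of PJ₃ on H; that is, Γ₀(1, h) = h for all h ∈ H, and Γ₀(g₁·g₂, h) = Γ₀(g₁, Γ₀(g₂, h)) for all g₁, g₂ ∈ PJ₃ and h ∈ H. -/

import Mathlib

/-!
`s₁₃` is an involution normalising `H` (it swaps `s₁₂` and `s₂₃`), so an induction over words in
the generators gives `J₃ = H ∪ H·s₁₃`, while the character `J₃ → ℤ/2` counting `s₁₃` shows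
`s₁₃ ∉ H`. Hence `Γ₀(g, h)` is the unique element of `H` among `g·h` and `g·h·s₁₃`. Since
`s₁₃² = 1`, both `Γ₀(g₁·g₂, h)` and `Γ₀(g₁, Γ₀(g₂, h))` lie in `H ∩ {g₁g₂h, g₁g₂h·s₁₃}`, so they
agree.
-/

/-- Generators of the cactus group `J₃`. -/
inductive CactusGen : Type
  | s12 | s23 | s13
  deriving DecidableEq

open FreeGroup in
/-- Relators of the cactus group `J₃`:
`s₁₂² = s₂₃² = s₁₃² = 1`, `s₁₂·s₁₃ = s₁₃·s₂₃`, `s₂₃·s₁₃ = s₁₃·s₁₂`. -/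
def cactusRels : Set (FreeGroup CactusGen) :=
  { of .s12 * of .s12,
    of .s23 * of .s23,
    of .s13 * of .s13,
    of .s12 * of .s13 * (of .s13 * of .s23)⁻¹,
    of .s23 * of .s13 * (of .s13 * of .s12)⁻¹ }

/-- The cactus group `J₃` as a presented group. -/
abbrev J3 : Type := PresentedGroup cactusRels

def s12 : J3 := PresentedGroup.of .s12
def s23 : J3 := PresentedGroup.of .s23
def s13 : J3 := PresentedGroup.of .s13

/-- The subgroup `H = J₃^{2}` of `J₃` generated by `s₁₂` and `s₂₃`. -/
def H : Subgroup J3 := Subgroup.closure {s12, s23}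

/-- The images of the generators in the symmetric group on three letters:
`s₁₂ ↦ (1 2)`, `s₂₃ ↦ (2 3)`, `s₁₃ ↦ (1 3)`. -/
def genPerm : CactusGen → Equiv.Perm (Fin 3)
  | .s12 => Equiv.swap 0 1
  | .s23 => Equiv.swap 1 2
  | .s13 => Equiv.swap 0 2

theorem cactusRels_hold : ∀ r ∈ cactusRels, FreeGroup.lift genPerm r = 1 := by
  intro r hr
  simp only [cactusRels, Set.mem_insert_iff, Set.mem_singleton_iff] at hr
  rcases hr with h | h | h | h | h <;> subst h <;>
    simp only [map_mul, map_inv, FreeGroup.lift_apply_of] <;> decide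

/-- The canonical projection `π : J₃ → S₃`; its kernel is the pure cactus group `PJ₃`. -/
def piJ3 : J3 →* Equiv.Perm (Fin 3) := PresentedGroup.toGroup cactusRels_hold

open Classical in
/-- The map `Γ₀ : (g, h) ↦ g·h` if `g·h ∈ H`, and `g·h·s₁₃` otherwise. -/
noncomputable def gamma (g h : J3) : J3 := if g * h ∈ H then g * h else g * h * s13

lemma s13_mul_self : s13 * s13 = 1 :=
  PresentedGroup.one_of_mem (by simp [cactusRels])

lemma s13_inv : s13⁻¹ = s13 :=
  inv_eq_of_mul_eq_one_right s13_mul_self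

lemma s12_mul_s13 : s12 * s13 = s13 * s23 :=
  PresentedGroup.mk_eq_mk_of_mul_inv_mem (by simp [cactusRels])

lemma s23_mul_s13 : s23 * s13 = s13 * s12 :=
  PresentedGroup.mk_eq_mk_of_mul_inv_mem (by simp [cactusRels])

lemma s12_mem_H : s12 ∈ H := Subgroup.subset_closure (by simp)

lemma s23_mem_H : s23 ∈ H := Subgroup.subset_closure (by simp)

lemma map_conj_s13_H : H.map (MulAut.conj s13).toMonoidHom = H := by
  have conj_s12 : MulAut.conj s13 s12 = s23 := by
    rw [MulAut.conj_apply, s13_inv, mul_assoc, s12_mul_s13, ← mul_assoc, s13_mul_self, one_mul]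
  have conj_s23 : MulAut.conj s13 s23 = s12 := by
    rw [MulAut.conj_apply, s13_inv, mul_assoc, s23_mul_s13, ← mul_assoc, s13_mul_self, one_mul]
  rw [H, MonoidHom.map_closure, MulEquiv.coe_toMonoidHom, Set.image_pair, conj_s12, conj_s23,
    Set.pair_comm]

lemma s13_mul_mul_s13_mem_H {h : J3} (hh : h ∈ H) : s13 * h * s13 ∈ H := by
  rw [← map_conj_s13_H]
  exact ⟨h, hh, by rw [MulEquiv.coe_toMonoidHom, MulAut.conj_apply, s13_inv]⟩

lemma mem_H_or_mul_s13_mem_H (x : J3) : x ∈ H ∨ x * s13 ∈ H := by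
  have hx : x ∈ Subgroup.closure (Set.range PresentedGroup.of) := by
    rw [PresentedGroup.closure_range_of]; exact Subgroup.mem_top x
  have of_mem {g : J3} (hg : g ∈ Set.range PresentedGroup.of) : g ∈ H ∨ g = s13 := by
    obtain ⟨_ | _ | _, rfl⟩ := hg
    exacts [.inl s12_mem_H, .inl s23_mem_H, .inr rfl]
  have mul_left {g y : J3} (hg : g ∈ H ∨ g = s13) (hy : y ∈ H ∨ y * s13 ∈ H) :
      g * y ∈ H ∨ g * y * s13 ∈ H := by
    rcases hg with hg | rfl <;> rcases hy with hy | hy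
    · exact .inl (H.mul_mem hg hy)
    · exact .inr (mul_assoc g y s13 ▸ H.mul_mem hg hy)
    · exact .inr (s13_mul_mul_s13_mem_H hy)
    · exact .inl (by simpa [mul_assoc, s13_mul_self] using s13_mul_mul_s13_mem_H hy)
  induction hx using Subgroup.closure_induction_left with
  | one => exact .inl H.one_mem
  | mul_left g hg y _ ih => exact mul_left (of_mem hg) ih
  | inv_mul_cancel g hg y _ ih =>
    exact mul_left ((of_mem hg).imp H.inv_mem fun hg : g = s13 => hg ▸ s13_inv) ih

def s13Parity : J3 →* Multiplicative (ZMod 2) :=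
  PresentedGroup.toGroup (f := fun
    | .s12 => 1
    | .s23 => 1
    | .s13 => Multiplicative.ofAdd 1) (by
      intro r hr
      simp only [cactusRels, Set.mem_insert_iff, Set.mem_singleton_iff] at hr
      rcases hr with h | h | h | h | h <;> subst h <;>
        simp only [map_mul, map_inv, FreeGroup.lift_apply_of] <;> decide)

lemma s13_notMem_H : s13 ∉ H := by
  have H_le_ker : H ≤ s13Parity.ker := by
    rw [H, Subgroup.closure_le]
    rintro _ (rfl | rfl) <;> exact PresentedGroup.toGroup.of _
  exact fun hs => absurd (H_le_ker hs : s13Parity s13 = 1) (by decide)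

lemma mul_s13_notMem_H {x : J3} (hx : x ∈ H) : x * s13 ∉ H := fun h =>
  s13_notMem_H (by simpa using H.mul_mem (H.inv_mem hx) h)

lemma gamma_mem_H (g h : J3) : gamma g h ∈ H := by
  unfold gamma
  split_ifs with hgh
  exacts [hgh, (mem_H_or_mul_s13_mem_H _).resolve_left hgh]

lemma gamma_eq_or (g h : J3) : gamma g h = g * h ∨ gamma g h = g * h * s13 := by
  unfold gamma
  split_ifs <;> simp

lemma gamma_eq_of_mem_H {g h y : J3} (hy : y ∈ H) (hgh : y = g * h ∨ y = g * h * s13) :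
    gamma g h = y := by
  unfold gamma
  split_ifs with hmem
  · rcases hgh with rfl | rfl
    exacts [rfl, absurd hy (mul_s13_notMem_H hmem)]
  · rcases hgh with rfl | rfl
    exacts [absurd hy hmem, rfl]

lemma gamma_mul (g₁ g₂ h : J3) : gamma (g₁ * g₂) h = gamma g₁ (gamma g₂ h) := by
  refine gamma_eq_of_mem_H (gamma_mem_H _ _) ?_
  rcases gamma_eq_or g₂ h with e₂ | e₂ <;> rcases gamma_eq_or g₁ (gamma g₂ h) with e₁ | e₁ <;>
    rw [e₁, e₂] <;> simp [mul_assoc, s13_mul_self]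

/-- `Γ₀` is well defined (takes values in `H` when `g ∈ PJ₃` and `h ∈ H`)
and defines a group action of `PJ₃ = ker π` on `H`. -/
theorem gamma_action :
    (∀ g ∈ MonoidHom.ker piJ3, ∀ h ∈ H, gamma g h ∈ H) ∧
      (∀ h ∈ H, gamma 1 h = h) ∧
        ∀ g₁ ∈ MonoidHom.ker piJ3, ∀ g₂ ∈ MonoidHom.ker piJ3, ∀ h ∈ H,
          gamma (g₁ * g₂) h = gamma g₁ (gamma g₂ h) :=
  ⟨fun g _ h _ => gamma_mem_H g h,
    fun h hh => gamma_eq_of_mem_H hh (.inl (one_mul h).symm),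
    fun g₁ _ g₂ _ h _ => gamma_mul g₁ g₂ h⟩
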